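/- For a short-range potential V ≥ 0 with zero-energy scattering solution f, the scattering length a₀ satisfies 8πa₀ = ∫_{ℝ³} V(x) f(x) dx. -/

import Mathlib

/- STATEMENT 14: For a short-range (compactly supported, continuous)
potential V ≥ 0 whose zero-energy scattering solution f satisfies
(−Δ + ½V)f = 0, f(x) → 1 as |x| → ∞ and f(x) = 1 − a₀/|x| outside the
support of V (defining the scattering length a₀), one has
  8π a₀ = ∫ V(x) f(x) dx. -/

open MeasureTheory Filter

noncomputable section

abbrev R3 := EuclideanSpace ℝ (Fin 3)

/-- The Laplacian on ℝ³, Δf(x) = Σᵢ ∂²f/∂xᵢ²(x). -/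
def laplacian (f : R3 → ℝ) (x : R3) : ℝ :=
  ∑ i : Fin 3,
    fderiv ℝ (fun y => fderiv ℝ f y (EuclideanSpace.single i (1 : ℝ))) x
      (EuclideanSpace.single i (1 : ℝ))


/-
Choose R with supp V ⊂ B(0, R) and put u(x) = Φ(‖x‖²), where Φ(s) = 1 - a₀ β(s)^(-1/2)
for a smooth β ≥ R²/2 with β(s) = s when s ≥ R². Then u is smooth and equals
1 - a₀/‖x‖ = f outside B(0, R), so f - u is C² with compact support and every ∂ᵢ²(f - u)
integrates to zero: ∫ Δf = ∫ Δu. For a radial u, r² (Δu)(r) is the r-derivative of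
2r³Φ'(r²), the flux of ∇u through the sphere of radius r divided by 4π; u is harmonic
outside a ball, so integrating in polar coordinates gives ∫ Δu = 4π · 2r³Φ'(r²) = 4π a₀
for r large. Finally ∫ V f = 2 ∫ Δf by the equation.
-/
open Real Set Metric Topology

theorem integral_fderiv_apply_eq_zero {E : Type*} [NormedAddCommGroup E] [NormedSpace ℝ E]
    [FiniteDimensional ℝ E] [MeasurableSpace E] [BorelSpace E]
    (μ : Measure E) [μ.IsAddHaarMeasure] {u : E → ℝ} (hu : ContDiff ℝ 1 u)
    (hsupp : HasCompactSupport u) (v : E) :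
    ∫ x, fderiv ℝ u x v ∂μ = 0 := by
  have hint : Integrable (fun x => fderiv ℝ u x v) μ :=
    ((hu.continuous_fderiv one_ne_zero).clm_apply continuous_const).integrable_of_hasCompactSupport
      (hsupp.fderiv_apply ℝ v)
  have h := integral_mul_fderiv_eq_neg_fderiv_mul_of_integrable (μ := μ)
    (f := fun _ => (1 : ℝ)) (g := u) (v := v) (by simp) (by simpa using hint)
    (by simpa using hu.continuous.integrable_of_hasCompactSupport hsupp)
    (fun x _ => differentiableAt_const 1) (fun x _ => hu.differentiable one_ne_zero x)
  simpa using h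

section Laplacian

variable {u v : R3 → ℝ}

theorem ContDiff.contDiff_fderiv_apply_const (hu : ContDiff ℝ 2 u) (e : R3) :
    ContDiff ℝ 1 (fun y => fderiv ℝ u y e) :=
  (hu.fderiv_right le_rfl).clm_apply contDiff_const

theorem ContDiff.continuous_laplacian (hu : ContDiff ℝ 2 u) : Continuous (laplacian u) :=
  continuous_finsetSum _ fun _ _ =>
    ((hu.contDiff_fderiv_apply_const _).continuous_fderiv one_ne_zero).clm_apply continuous_const

theorem HasCompactSupport.laplacian (hu : HasCompactSupport u) :
    HasCompactSupport (laplacian u) := by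
  refine hu.mono' fun x hx => ?_
  by_contra hxu
  refine hx (Finset.sum_eq_zero fun i _ => ?_)
  rw [fderiv_of_notMem_tsupport ℝ fun h => hxu (tsupport_fderiv_apply_subset ℝ _ h)]
  rfl

theorem laplacian_sub (hu : ContDiff ℝ 2 u) (hv : ContDiff ℝ 2 v) (x : R3) :
    laplacian (u - v) x = laplacian u x - laplacian v x := by
  rw [laplacian, laplacian, laplacian, ← Finset.sum_sub_distrib]
  refine Finset.sum_congr rfl fun i _ => ?_
  set e := EuclideanSpace.single i (1 : ℝ)
  have hpartial :
      (fun y => fderiv ℝ (u - v) y e) = fun y => fderiv ℝ u y e - fderiv ℝ v y e := by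
    funext y
    rw [fderiv_sub (hu.differentiable two_ne_zero y) (hv.differentiable two_ne_zero y)]
    rfl
  rw [hpartial, fderiv_fun_sub ((hu.contDiff_fderiv_apply_const e).differentiable one_ne_zero x)
    ((hv.contDiff_fderiv_apply_const e).differentiable one_ne_zero x)]
  rfl

theorem integral_laplacian_eq_zero (hu : ContDiff ℝ 2 u) (hsupp : HasCompactSupport u) :
    ∫ x, laplacian u x = 0 := by
  unfold laplacian
  rw [integral_finsetSum]
  · exact Finset.sum_eq_zero fun _ _ => integral_fderiv_apply_eq_zero _
      (hu.contDiff_fderiv_apply_const _) (hsupp.fderiv_apply ℝ _) _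
  · exact fun _ _ => ((hu.contDiff_fderiv_apply_const _).continuous_fderiv one_ne_zero).clm_apply
      continuous_const |>.integrable_of_hasCompactSupport
        ((hsupp.fderiv_apply ℝ _).fderiv_apply ℝ _)

theorem integral_laplacian_eq_of_hasCompactSupport_sub (hu : ContDiff ℝ 2 u)
    (hv : ContDiff ℝ 2 v) (huv : HasCompactSupport (u - v)) (hv' : Integrable (laplacian v)) :
    ∫ x, laplacian u x = ∫ x, laplacian v x := by
  have hdecomp : laplacian u = laplacian (u - v) + laplacian v :=
    funext fun x => by rw [Pi.add_apply, laplacian_sub hu hv]; ring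
  have hint : Integrable (laplacian (u - v)) :=
    (hu.sub hv).continuous_laplacian.integrable_of_hasCompactSupport huv.laplacian
  rw [hdecomp, integral_add' hint hv', integral_laplacian_eq_zero (u := u - v) (hu.sub hv) huv,
    zero_add]

end Laplacian

section Radial

variable {Φ : ℝ → ℝ}

def radialLaplacian (Φ : ℝ → ℝ) (r : ℝ) : ℝ :=
  4 * r ^ 2 * deriv (deriv Φ) (r ^ 2) + 6 * deriv Φ (r ^ 2)

theorem hasFDerivAt_comp_norm_sq {g : ℝ → ℝ} (hg : Differentiable ℝ g) (x : R3) :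
    HasFDerivAt (fun y : R3 => g (‖y‖ ^ 2)) (deriv g (‖x‖ ^ 2) • (2 • innerSL ℝ x)) x :=
  (hg _).hasDerivAt.comp_hasFDerivAt x (hasStrictFDerivAt_norm_sq x).hasFDerivAt

theorem fderiv_comp_norm_sq_single {g : ℝ → ℝ} (hg : Differentiable ℝ g) (x : R3) (i : Fin 3) :
    fderiv ℝ (fun y : R3 => g (‖y‖ ^ 2)) x (EuclideanSpace.single i 1)
      = deriv g (‖x‖ ^ 2) * (2 * x i) := by
  rw [(hasFDerivAt_comp_norm_sq hg x).fderiv]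
  simp [EuclideanSpace.inner_single_right]

theorem laplacian_comp_norm_sq (hΦ : ContDiff ℝ 2 Φ) (x : R3) :
    laplacian (fun y => Φ (‖y‖ ^ 2)) x = radialLaplacian Φ ‖x‖ := by
  have hpartial (i : Fin 3) :
      fderiv ℝ (fun y => fderiv ℝ (fun y : R3 => Φ (‖y‖ ^ 2)) y (EuclideanSpace.single i 1)) x
        (EuclideanSpace.single i 1)
      = deriv (deriv Φ) (‖x‖ ^ 2) * (2 * x i) * (2 * x i) + deriv Φ (‖x‖ ^ 2) * 2 := by
    simp_rw [fderiv_comp_norm_sq_single (hΦ.differentiable two_ne_zero)]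
    have hcoord : HasFDerivAt (fun y : R3 => 2 * y i)
        ((2 : ℝ) • (EuclideanSpace.proj i : R3 →L[ℝ] ℝ)) x :=
      (EuclideanSpace.proj i : R3 →L[ℝ] ℝ).hasFDerivAt.const_mul 2
    rw [((hasFDerivAt_comp_norm_sq hΦ.differentiable_deriv_two x).fun_mul hcoord).fderiv]
    simp [EuclideanSpace.inner_single_right]
    ring
  have hnorm : ‖x‖ ^ 2 = x 0 ^ 2 + x 1 ^ 2 + x 2 ^ 2 := by
    simp [EuclideanSpace.norm_sq_eq, Fin.sum_univ_three]
  simp only [laplacian, hpartial, Fin.sum_univ_three, radialLaplacian]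
  linear_combination (-4 * deriv (deriv Φ) (‖x‖ ^ 2)) * hnorm

theorem continuous_radialLaplacian (hΦ : ContDiff ℝ 2 Φ) : Continuous (radialLaplacian Φ) := by
  have h1 : Continuous (deriv Φ) := hΦ.continuous_deriv one_le_two
  have h2 : Continuous (deriv (deriv Φ)) := (hΦ.deriv' (n := 1)).continuous_deriv le_rfl
  unfold radialLaplacian
  fun_prop

theorem hasDerivAt_radialFlux (hΦ : ContDiff ℝ 2 Φ) (r : ℝ) :
    HasDerivAt (fun r => 2 * r ^ 3 * deriv Φ (r ^ 2)) (r ^ 2 * radialLaplacian Φ r) r := by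
  have h := ((hasDerivAt_pow 3 r).const_mul 2).fun_mul
    ((hΦ.differentiable_deriv_two _).hasDerivAt.comp r (hasDerivAt_pow 2 r))
  exact h.congr_deriv (by simp only [radialLaplacian, Function.comp]; push_cast; ring)

theorem integral_laplacian_comp_norm_sq (hΦ : ContDiff ℝ 2 Φ) {R : ℝ} (hR : 0 ≤ R)
    (hvanish : ∀ r ≥ R, radialLaplacian Φ r = 0) :
    ∫ x : R3, laplacian (fun y => Φ (‖y‖ ^ 2)) x = 8 * π * R ^ 3 * deriv Φ (R ^ 2) := by
  have hradial :
      ∫ r in Ioi (0 : ℝ), r ^ 2 * radialLaplacian Φ r = 2 * R ^ 3 * deriv Φ (R ^ 2) := by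
    rw [setIntegral_eq_of_subset_of_forall_sdiff_eq_zero measurableSet_Ioi
      (Ioc_subset_Ioi_self : Ioc 0 R ⊆ Ioi 0)
      fun r hr => by rw [hvanish r (not_le.1 fun h => hr.2 ⟨hr.1, h⟩).le, mul_zero],
      ← intervalIntegral.integral_of_le hR,
      intervalIntegral.integral_eq_sub_of_hasDerivAt (fun r _ => hasDerivAt_radialFlux hΦ r)
        (((continuous_pow 2).mul (continuous_radialLaplacian hΦ) :
        Continuous fun r => r ^ 2 * radialLaplacian Φ r).intervalIntegrable _ _)]
    simp
  simp_rw [laplacian_comp_norm_sq hΦ]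
  rw [integral_fun_norm_addHaar volume (radialLaplacian Φ), finrank_euclideanSpace_fin,
    measureReal_def, EuclideanSpace.volume_ball_fin_three]
  simp_rw [smul_eq_mul]
  rw [hradial]
  simp only [ENNReal.ofReal_one, one_pow, one_mul, nsmul_eq_mul, Nat.cast_ofNat,
    ENNReal.toReal_ofReal (by positivity : 0 ≤ π * 4 / 3)]
  ring

theorem integrable_laplacian_comp_norm_sq (hΦ : ContDiff ℝ 2 Φ) {R : ℝ}
    (hvanish : ∀ r ≥ R, radialLaplacian Φ r = 0) :
    Integrable (laplacian fun y : R3 => Φ (‖y‖ ^ 2)) := by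
  have hw : ContDiff ℝ 2 fun y : R3 => Φ (‖y‖ ^ 2) := hΦ.comp (contDiff_norm_sq ℝ)
  refine hw.continuous_laplacian.integrable_of_hasCompactSupport
    (HasCompactSupport.intro (isCompact_closedBall 0 R) fun x hx => ?_)
  rw [laplacian_comp_norm_sq hΦ]
  rw [mem_closedBall, dist_zero_right, not_le] at hx
  exact hvanish _ hx.le

end Radial

section Profile

variable {a c : ℝ}

def smoothMax (c s : ℝ) : ℝ := c / 2 + (s - c / 2) * smoothTransition (2 * s / c - 1)

theorem half_le_smoothMax (hc : 0 < c) (s : ℝ) : c / 2 ≤ smoothMax c s := by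
  rcases le_or_gt s (c / 2) with hs | hs
  · have hzero : smoothTransition (2 * s / c - 1) = 0 :=
      smoothTransition.zero_of_nonpos (by rw [sub_nonpos, div_le_one hc]; linarith)
    simp [smoothMax, hzero]
  · have := mul_nonneg (sub_nonneg.2 hs.le) (smoothTransition.nonneg (2 * s / c - 1))
    unfold smoothMax
    linarith

theorem smoothMax_of_le (hc : 0 < c) {s : ℝ} (hs : c ≤ s) : smoothMax c s = s := by
  have hone : smoothTransition (2 * s / c - 1) = 1 :=
    smoothTransition.one_of_one_le (by rw [le_sub_iff_add_le, le_div_iff₀ hc]; linarith)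
  simp only [smoothMax, hone]
  ring

theorem contDiff_smoothMax {n : ℕ∞} : ContDiff ℝ n (smoothMax c) := by
  unfold smoothMax
  fun_prop

def scatteringProfile (a c s : ℝ) : ℝ := 1 - a * smoothMax c s ^ (-(1 / 2) : ℝ)

theorem contDiff_scatteringProfile (hc : 0 < c) {n : ℕ∞} :
    ContDiff ℝ n (scatteringProfile a c) :=
  contDiff_const.sub (contDiff_const.mul (contDiff_smoothMax.rpow_const_of_ne fun s =>
    ((half_pos hc).trans_le (half_le_smoothMax hc s)).ne'))

theorem scatteringProfile_sq_of_le (hc : 0 < c) {r : ℝ} (hr : 0 ≤ r) (hcr : c ≤ r ^ 2) :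
    scatteringProfile a c (r ^ 2) = 1 - a / r := by
  rw [scatteringProfile, smoothMax_of_le hc hcr, rpow_neg (sq_nonneg r), ← sqrt_eq_rpow,
    sqrt_sq hr, div_eq_mul_inv]

theorem deriv_scatteringProfile_eventuallyEq (hc : 0 < c) {s : ℝ} (hs : c < s) :
    deriv (scatteringProfile a c) =ᶠ[𝓝 s] fun t => a / 2 * t ^ (-(3 / 2) : ℝ) := by
  filter_upwards [eventually_gt_nhds hs] with t ht
  have ht0 : 0 < t := hc.trans ht
  have hprofile : scatteringProfile a c =ᶠ[𝓝 t] fun t => 1 - a * t ^ (-(1 / 2) : ℝ) := by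
    filter_upwards [eventually_gt_nhds ht] with t' ht'
    rw [scatteringProfile, smoothMax_of_le hc ht'.le]
  rw [hprofile.deriv_eq,
    (((hasDerivAt_rpow_const (Or.inl ht0.ne')).const_mul a).const_sub 1).deriv]
  norm_num
  ring

theorem radialLaplacian_scatteringProfile (hc : 0 < c) {r : ℝ} (hr : c < r ^ 2) :
    radialLaplacian (scatteringProfile a c) r = 0 := by
  have hr0 : 0 < r ^ 2 := hc.trans hr
  rw [radialLaplacian, (deriv_scatteringProfile_eventuallyEq hc hr).deriv_eq,
    (deriv_scatteringProfile_eventuallyEq hc hr).eq_of_nhds,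
    ((hasDerivAt_rpow_const (Or.inl hr0.ne')).const_mul (a / 2)).deriv]
  have hpow : r ^ 2 * (r ^ 2) ^ (-(3 / 2) - 1 : ℝ) = (r ^ 2) ^ (-(3 / 2) : ℝ) := by
    rw [rpow_sub hr0, rpow_one, mul_div_cancel₀ _ hr0.ne']
  linear_combination (-3 * a) * hpow

theorem integral_laplacian_scatteringProfile (hc : 0 < c) :
    ∫ x : R3, laplacian (fun y => scatteringProfile a c (‖y‖ ^ 2)) x = 4 * π * a := by
  have hR : c < (c + 1) ^ 2 := by nlinarith
  rw [integral_laplacian_comp_norm_sq (contDiff_scatteringProfile hc) (by linarith : 0 ≤ c + 1)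
      fun r hr => radialLaplacian_scatteringProfile hc (by nlinarith),
    (deriv_scatteringProfile_eventuallyEq hc hR).eq_of_nhds]
  have hpow : ((c + 1) ^ 2) ^ (-(3 / 2) : ℝ) * (c + 1) ^ 3 = 1 := by
    rw [← rpow_natCast (c + 1) 2, ← rpow_mul (by linarith)]
    norm_num
    exact inv_mul_cancel₀ (pow_pos (by linarith) 3).ne'
  linear_combination (4 * π * a) * hpow

theorem integrable_laplacian_scatteringProfile (hc : 0 < c) :
    Integrable (laplacian fun y : R3 => scatteringProfile a c (‖y‖ ^ 2)) :=
  integrable_laplacian_comp_norm_sq (contDiff_scatteringProfile hc) (R := c + 1) fun r hr =>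
    radialLaplacian_scatteringProfile hc (by nlinarith)

end Profile

theorem scattering_length_formula_general
    (V : R3 → ℝ) (f : R3 → ℝ) (a₀ : ℝ)
    -- V is a short-range, repulsive potential
    (hVsupp : HasCompactSupport V)
    -- f solves the zero-energy scattering equation (−Δ + ½V) f = 0
    (hf : ContDiff ℝ 2 f)
    (hscat : ∀ x : R3, -laplacian f x + (1 / 2) * V x * f x = 0)
    -- outside the support of V, f(x) = 1 − a₀/|x| defines the scattering length
    (hout : ∀ x : R3, x ∉ tsupport V → f x = 1 - a₀ / ‖x‖) :
    8 * Real.pi * a₀ = ∫ x : R3, V x * f x := by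
  obtain ⟨R, hR, hVR⟩ := hVsupp.isBounded.subset_ball_lt 0 0
  have hc : 0 < R ^ 2 := by positivity
  set u : R3 → ℝ := fun y => scatteringProfile a₀ (R ^ 2) (‖y‖ ^ 2)
  have hu : ContDiff ℝ 2 u := (contDiff_scatteringProfile hc).comp (contDiff_norm_sq ℝ)
  have hfu : HasCompactSupport (f - u) := by
    refine HasCompactSupport.intro (isCompact_closedBall 0 R) fun x hx => ?_
    rw [mem_closedBall, dist_zero_right, not_le] at hx
    have hxV : x ∉ tsupport V := fun h => (mem_ball_zero_iff.1 (hVR h)).not_gt hx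
    change f x - scatteringProfile a₀ (R ^ 2) (‖x‖ ^ 2) = 0
    rw [hout x hxV, scatteringProfile_sq_of_le hc (norm_nonneg x)
      (pow_le_pow_left₀ hR.le hx.le 2), sub_self]
  have hVf (x : R3) : V x * f x = 2 * laplacian f x := by linarith [hscat x]
  calc 8 * π * a₀ = 2 * ∫ x, laplacian u x := by
        rw [integral_laplacian_scatteringProfile hc]; ring
    _ = 2 * ∫ x, laplacian f x := by
        rw [integral_laplacian_eq_of_hasCompactSupport_sub hf hu hfu
          (integrable_laplacian_scatteringProfile hc)]
    _ = ∫ x, V x * f x := by simp_rw [hVf, integral_const_mul]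

theorem scattering_length_formula
    (V : R3 → ℝ) (f : R3 → ℝ) (a₀ : ℝ)
    -- V is a short-range, repulsive potential
    (hVsupp : HasCompactSupport V) (hVpos : ∀ x, 0 ≤ V x) (hVcont : Continuous V)
    -- f solves the zero-energy scattering equation (−Δ + ½V) f = 0
    (hf : ContDiff ℝ 2 f)
    (hscat : ∀ x : R3, -laplacian f x + (1 / 2) * V x * f x = 0)
    -- with boundary condition f(x) → 1 as |x| → ∞
    (hbc : Tendsto f (cocompact R3) (nhds 1))
    -- outside the support of V, f(x) = 1 − a₀/|x| defines the scattering length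
    (hout : ∀ x : R3, x ∉ tsupport V → f x = 1 - a₀ / ‖x‖) :
    8 * Real.pi * a₀ = ∫ x : R3, V x * f x :=
  scattering_length_formula_general V f a₀ hVsupp hf hscat hout
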